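/- arXiv:2604.23894 — 2 statements merged into one kernel-verified Lean document; each statement's English description precedes it below -/
import Mathlib

section
/- For every cell p of the 3 × 2 grid (3 rows, 2 columns), there exist two colorings c₀, c₁ : Fin 3 × Fin 2 → Fin 2 that agree on every cell other than p, such that the grid graph of c₀ contains a cycle and the grid graph of c₁ is acyclic. -/
/-- The grid graph of a coloring `c`: cells at Manhattan distance 1
(on the underlying natural-number coordinates) with equal colors are adjacent. -/
def gridGraph {m n : ℕ} {α : Type*} (c : Fin m × Fin n → α) :
    SimpleGraph (Fin m × Fin n) where
  Adj x y := Nat.dist x.1.val y.1.val + Nat.dist x.2.val y.2.val = 1 ∧ c x = c y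
  symm := by
    constructor
    intro x y ⟨h, hc⟩
    refine ⟨?_, hc.symm⟩
    rwa [Nat.dist_comm y.1.val, Nat.dist_comm y.2.val]
  loopless := by
    constructor
    intro x ⟨h, _⟩
    simp [Nat.dist_self] at h

open SimpleGraph

instance gridGraph.adjDecidable {m n : ℕ} {α : Type*} [DecidableEq α]
    (c : Fin m × Fin n → α) : DecidableRel (gridGraph c).Adj :=
  fun _ _ => instDecidableAnd

instance sdiffSingleAdjDecidable {V : Type*} [DecidableEq V] (G : SimpleGraph V)
    [DecidableRel G.Adj] (e : Sym2 V) : DecidableRel (G \ fromEdgeSet {e}).Adj :=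
  fun a b => decidable_of_iff (G.Adj a b ∧ ¬(s(a, b) = e ∧ a ≠ b)) (by
    simp [fromEdgeSet_adj])

/-- Coloring: rows 0 and 1 get color 0, row 2 gets color 1. -/
def cA : Fin 3 × Fin 2 → Fin 2 := fun x => if x.1.val ≤ 1 then 0 else 1

/-- Coloring: rows 1 and 2 get color 0, row 0 gets color 1. -/
def cB : Fin 3 × Fin 2 → Fin 2 := fun x => if 1 ≤ x.1.val then 0 else 1

lemma cycA : ¬ (gridGraph cA).IsAcyclic := by
  intro h
  refine h (v := ((0,0) : Fin 3 × Fin 2))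
    (Walk.cons (v := (1,0)) (by decide) (Walk.cons (v := (1,1)) (by decide)
      (Walk.cons (v := (0,1)) (by decide) (Walk.cons (by decide) Walk.nil)))) ?_
  rw [Walk.isCycle_def, Walk.isTrail_def]
  exact ⟨by decide, by simp, by decide⟩

lemma cycB : ¬ (gridGraph cB).IsAcyclic := by
  intro h
  refine h (v := ((1,0) : Fin 3 × Fin 2))
    (Walk.cons (v := (2,0)) (by decide) (Walk.cons (v := (2,1)) (by decide)
      (Walk.cons (v := (1,1)) (by decide) (Walk.cons (by decide) Walk.nil)))) ?_
  rw [Walk.isCycle_def, Walk.isTrail_def]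
  exact ⟨by decide, by simp, by decide⟩

/-- Static core of Lemma 3 (the `2 × 3` adversary, here as 3 rows and
2 columns): every cell `p` can be the deciding cell. -/
theorem stmt_11 (p : Fin 3 × Fin 2) :
    ∃ c₀ c₁ : Fin 3 × Fin 2 → Fin 2,
      (∀ x, x ≠ p → c₀ x = c₁ x) ∧
      ¬ (gridGraph c₀).IsAcyclic ∧ (gridGraph c₁).IsAcyclic := by
  obtain ⟨i, j⟩ := p
  fin_cases i <;> fin_cases j <;>
    [ (refine ⟨cA, Function.update cA (0,0) 1, ?_, cycA, ?_⟩);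
      (refine ⟨cA, Function.update cA (0,1) 1, ?_, cycA, ?_⟩);
      (refine ⟨cA, Function.update cA (1,0) 1, ?_, cycA, ?_⟩);
      (refine ⟨cA, Function.update cA (1,1) 1, ?_, cycA, ?_⟩);
      (refine ⟨cB, Function.update cB (2,0) 1, ?_, cycB, ?_⟩);
      (refine ⟨cB, Function.update cB (2,1) 1, ?_, cycB, ?_⟩) ] <;>
  first
    | (intro x hx; exact (Function.update_of_ne hx _ _).symm)
    | (rw [isAcyclic_iff_forall_adj_isBridge]; simp only [isBridge_iff]; decide)
end

section
/- For all natural numbers p, q ≥ 1 and for every cell x of the 2p × 2q grid, there exist two colorings c₀, c₁ : Fin (2*p) × Fin (2*q) → Fin 4 that agree on every cell other than x, such that the grid graph of c₀ contains a cycle and the grid graph of c₁ is acyclic. -/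
def f0 (a b i j : ℕ) : ℕ :=
  if i / 2 = a ∧ j / 2 = b then 2 * ((a + b) % 2)
  else 2 * ((i / 2 + j / 2) % 2) + (i + j) % 2

lemma f0_block {a b i j : ℕ} (h1 : i / 2 = a) (h2 : j / 2 = b) :
    f0 a b i j = 2 * ((a + b) % 2) := if_pos ⟨h1, h2⟩

lemma f0_out {a b i j : ℕ} (h : ¬(i / 2 = a ∧ j / 2 = b)) :
    f0 a b i j = 2 * ((i / 2 + j / 2) % 2) + (i + j) % 2 := if_neg h


lemma base_ne {u1 u2 v1 v2 : ℕ}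
    (hdist : u1 - v1 + (v1 - u1) + (u2 - v2 + (v2 - u2)) = 1) :
    2 * ((u1/2 + u2/2) % 2) + (u1 + u2) % 2 ≠ 2 * ((v1/2 + v2/2) % 2) + (v1 + v2) % 2 := by
  omega

lemma block_out_ne {a b u1 u2 v1 v2 : ℕ} (hu1 : u1 / 2 = a) (hu2 : u2 / 2 = b)
    (hv : ¬v1 / 2 = a ∨ ¬v2 / 2 = b)
    (hdist : u1 - v1 + (v1 - u1) + (u2 - v2 + (v2 - u2)) = 1) :
    2 * ((a + b) % 2) ≠ 2 * ((v1/2 + v2/2) % 2) + (v1 + v2) % 2 := by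
  intro h
  have hpar : (v1 + v2) % 2 = 0 := by omega
  have hs : (v1/2 + v2/2) % 2 = (a + b) % 2 := by omega
  rcases (by omega : (v1 = u1 + 1 ∧ v2 = u2) ∨ (v1 + 1 = u1 ∧ v2 = u2) ∨
      (v2 = u2 + 1 ∧ v1 = u1) ∨ (v2 + 1 = u2 ∧ v1 = u1)) with ⟨h,h'⟩|⟨h,h'⟩|⟨h,h'⟩|⟨h,h'⟩ <;>
    subst h' <;> omega

lemma xcell_out_ne {a b x1 x2 v1 v2 : ℕ} (ha : a = x1 / 2) (hb : b = x2 / 2)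
    (hv : ¬v1 / 2 = a ∨ ¬v2 / 2 = b)
    (hdist : x1 - v1 + (v1 - x1) + (x2 - v2 + (v2 - x2)) = 1) :
    2 * ((a + b) % 2) + 1 ≠ 2 * ((v1/2 + v2/2) % 2) + (v1 + v2) % 2 := by
  intro h
  have hpar : (v1 + v2) % 2 = 1 := by omega
  have hs : (v1/2 + v2/2) % 2 = (a + b) % 2 := by omega
  rcases (by omega : (v1 = x1 + 1 ∧ v2 = x2) ∨ (v1 + 1 = x1 ∧ v2 = x2) ∨
      (v2 = x2 + 1 ∧ v1 = x1) ∨ (v2 + 1 = x2 ∧ v1 = x1)) with ⟨h,h'⟩|⟨h,h'⟩|⟨h,h'⟩|⟨h,h'⟩ <;>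
    subst h' <;> omega

lemma block_diag {x1 x2 u1 u2 v1 v2 d1 d2 : ℕ}
    (hd1 : x1 + d1 = 4 * (x1 / 2) + 1) (hd2 : x2 + d2 = 4 * (x2 / 2) + 1)
    (hu1 : u1 / 2 = x1 / 2) (hu2 : u2 / 2 = x2 / 2)
    (hv1 : v1 / 2 = x1 / 2) (hv2 : v2 / 2 = x2 / 2)
    (hu : ¬(u1 = x1 ∧ u2 = x2)) (hv : ¬(v1 = x1 ∧ v2 = x2))
    (hdist : u1 - v1 + (v1 - u1) + (u2 - v2 + (v2 - u2)) = 1) :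
    (u1 = d1 ∧ u2 = d2) ∨ (v1 = d1 ∧ v2 = d2) := by
  omega

lemma strip4 {A B : ℕ} (hA : A < 4) (hB : B < 4) (h : A % 4 = B % 4) : A = B := by
  omega

lemma lt4a (a b : ℕ) : 2 * ((a + b) % 2) + 1 < 4 := by omega

lemma lt4b (i j : ℕ) : 2 * ((i / 2 + j / 2) % 2) + (i + j) % 2 < 4 := by omega

lemma star_acyclic {V : Type*} [DecidableEq V] {G : SimpleGraph V} (d : V)
    (h : ∀ u v, G.Adj u v → u = d ∨ v = d) : G.IsAcyclic := by
  intro v c hc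
  have hd : d ∈ c.support := by
    cases c with
    | nil => exact absurd rfl hc.ne_nil
    | cons hadj p =>
      rcases h _ _ hadj with h1 | h1
      · subst h1; exact SimpleGraph.Walk.start_mem_support _
      · rw [SimpleGraph.Walk.support_cons]
        exact List.mem_cons_of_mem _ (h1 ▸ SimpleGraph.Walk.start_mem_support p)
  obtain ⟨c', hc'⟩ : ∃ c' : G.Walk d d, c'.IsCycle := ⟨c.rotate d hd, hc.rotate hd⟩
  clear hc hd
  cases c' with
  | nil => exact hc'.ne_nil rfl
  | cons hadj1 q =>
    rename_i w
    cases q with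
    | nil => exact hadj1.ne rfl
    | cons hadj2 r =>
      rename_i u
      have hw : w ≠ d := fun hh => hadj1.ne hh.symm
      have hu : u = d := (h _ _ hadj2).resolve_left hw
      subst hu
      cases r with
      | nil =>
        have := hc'.three_le_length
        simp [SimpleGraph.Walk.length_cons] at this
      | cons hadj3 t =>
        rename_i z
        have hn := hc'.support_nodup
        simp [SimpleGraph.Walk.support_cons] at hn


set_option maxHeartbeats 800000 in
/-- Static core of Lemma 4 (even dimensions): for a `2p × 2q` grid, every cell
`x` can be the deciding cell, using 4 colors. -/
theorem stmt_12 (p q : ℕ) (hp : 1 ≤ p) (hq : 1 ≤ q)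
    (x : Fin (2 * p) × Fin (2 * q)) :
    ∃ c₀ c₁ : Fin (2 * p) × Fin (2 * q) → Fin 4,
      (∀ y, y ≠ x → c₀ y = c₁ y) ∧
      ¬ (gridGraph c₀).IsAcyclic ∧ (gridGraph c₁).IsAcyclic := by
  obtain ⟨x1, x2⟩ := x
  have hx1 := x1.isLt
  have hx2 := x2.isLt
  set a := (x1 : ℕ) / 2 with ha
  set b := (x2 : ℕ) / 2 with hb
  set c₀ : Fin (2 * p) × Fin (2 * q) → Fin 4 :=
    fun y => ⟨f0 a b y.1 y.2 % 4, Nat.mod_lt _ (by norm_num)⟩ with hc0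
  clear_value a b c₀
  refine ⟨c₀,
    fun y => if y = (x1, x2) then ⟨(2 * ((a + b) % 2) + 1) % 4, by omega⟩ else c₀ y,
    ?_, ?_, ?_⟩
  · intro y hy
    simp [hy]
  · -- c₀ contains a cycle: the monochromatic block at (a,b)
    have hb1 : 2 * a + 1 < 2 * p := by omega
    have hb2 : 2 * b + 1 < 2 * q := by omega
    set v00 : Fin (2 * p) × Fin (2 * q) := (⟨2 * a, by omega⟩, ⟨2 * b, by omega⟩) with hv00
    set v01 : Fin (2 * p) × Fin (2 * q) := (⟨2 * a, by omega⟩, ⟨2 * b + 1, hb2⟩) with hv01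
    set v11 : Fin (2 * p) × Fin (2 * q) := (⟨2 * a + 1, hb1⟩, ⟨2 * b + 1, hb2⟩) with hv11
    set v10 : Fin (2 * p) × Fin (2 * q) := (⟨2 * a + 1, hb1⟩, ⟨2 * b, by omega⟩) with hv10
    have hcol : ∀ y : Fin (2 * p) × Fin (2 * q),
        (y.1 : ℕ) / 2 = a → (y.2 : ℕ) / 2 = b → c₀ y = ⟨2 * ((a + b) % 2) % 4, by omega⟩ := by
      intro y h1 h2
      simp only [hc0]
      congr 1
      rw [f0_block h1 h2]
    have e01 : (gridGraph c₀).Adj v00 v01 := by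
      refine ⟨by simp [hv00, hv01, Nat.dist] <;> omega, ?_⟩
      rw [hcol v00 (by simp [hv00] <;> omega) (by simp [hv00] <;> omega),
          hcol v01 (by simp [hv01] <;> omega) (by simp [hv01] <;> omega)]
    have e12 : (gridGraph c₀).Adj v01 v11 := by
      refine ⟨by simp [hv01, hv11, Nat.dist] <;> omega, ?_⟩
      rw [hcol v01 (by simp [hv01] <;> omega) (by simp [hv01] <;> omega),
          hcol v11 (by simp [hv11] <;> omega) (by simp [hv11] <;> omega)]
    have e23 : (gridGraph c₀).Adj v11 v10 := by
      refine ⟨by simp [hv11, hv10, Nat.dist] <;> omega, ?_⟩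
      rw [hcol v11 (by simp [hv11] <;> omega) (by simp [hv11] <;> omega),
          hcol v10 (by simp [hv10] <;> omega) (by simp [hv10] <;> omega)]
    have e30 : (gridGraph c₀).Adj v10 v00 := by
      refine ⟨by simp [hv10, hv00, Nat.dist] <;> omega, ?_⟩
      rw [hcol v10 (by simp [hv10] <;> omega) (by simp [hv10] <;> omega),
          hcol v00 (by simp [hv00] <;> omega) (by simp [hv00] <;> omega)]
    intro hA
    refine hA (SimpleGraph.Walk.cons e01 (SimpleGraph.Walk.cons e12
      (SimpleGraph.Walk.cons e23 (SimpleGraph.Walk.cons e30 SimpleGraph.Walk.nil)))) ?_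
    rw [SimpleGraph.Walk.isCycle_def]
    refine ⟨?_, by simp, ?_⟩
    · rw [SimpleGraph.Walk.isTrail_def]
      simp [hv00, hv01, hv11, hv10, Sym2.eq_iff, Prod.ext_iff, Fin.ext_iff] <;> omega
    · simp [hv00, hv01, hv11, hv10, Prod.ext_iff, Fin.ext_iff] <;> omega
  · -- c₁ is acyclic: a star centered at the cell diagonal to x in its block
    apply star_acyclic (d := (⟨4 * a + 1 - x1, by omega⟩, ⟨4 * b + 1 - x2, by omega⟩))
    rintro ⟨u1, u2⟩ ⟨v1, v2⟩ ⟨hdist, hcol⟩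
    have hu1 := u1.isLt
    have hu2 := u2.isLt
    have hv1 := v1.isLt
    have hv2 := v2.isLt
    simp only [Nat.dist] at hdist
    simp only [Prod.ext_iff, Fin.ext_iff]
    simp only [hc0, Prod.mk.injEq] at hcol
    split_ifs at hcol with h1 h2 h2
    · -- u = x, v = x
      simp only [Prod.mk.injEq, Fin.ext_iff] at h1 h2
      omega
    · -- u = x, v ≠ x
      exfalso
      simp only [Prod.mk.injEq, Fin.ext_iff, not_and] at h1 h2
      rw [Fin.mk.injEq] at hcol
      have hdist' : (x1 : ℕ) - (v1 : ℕ) + ((v1 : ℕ) - (x1 : ℕ))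
          + ((x2 : ℕ) - (v2 : ℕ) + ((v2 : ℕ) - (x2 : ℕ))) = 1 := by omega
      by_cases hv : (v1 : ℕ) / 2 = a ∧ (v2 : ℕ) / 2 = b
      · rw [f0_block hv.1 hv.2] at hcol
        exact absurd (strip4 (lt4a a b) (by omega) hcol) (by omega)
      · rw [f0_out hv] at hcol
        rw [not_and_or] at hv
        exact xcell_out_ne ha hb hv hdist' (strip4 (lt4a a b) (lt4b _ _) hcol)
    · -- v = x, u ≠ x
      exfalso
      simp only [Prod.mk.injEq, Fin.ext_iff, not_and] at h1 h2
      rw [Fin.mk.injEq] at hcol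
      have hdist' : (x1 : ℕ) - (u1 : ℕ) + ((u1 : ℕ) - (x1 : ℕ))
          + ((x2 : ℕ) - (u2 : ℕ) + ((u2 : ℕ) - (x2 : ℕ))) = 1 := by omega
      by_cases hu : (u1 : ℕ) / 2 = a ∧ (u2 : ℕ) / 2 = b
      · rw [f0_block hu.1 hu.2] at hcol
        exact absurd (strip4 (by omega) (lt4a a b) hcol) (by omega)
      · rw [f0_out hu] at hcol
        rw [not_and_or] at hu
        exact xcell_out_ne ha hb hu hdist'
          ((strip4 (lt4b _ _) (lt4a a b) hcol).symm)
    · -- u ≠ x, v ≠ x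
      simp only [Prod.mk.injEq, Fin.ext_iff, not_and] at h1 h2
      rw [Fin.mk.injEq] at hcol
      by_cases hu : (u1 : ℕ) / 2 = a ∧ (u2 : ℕ) / 2 = b <;>
        by_cases hv : (v1 : ℕ) / 2 = a ∧ (v2 : ℕ) / 2 = b
      · -- both in block: one of them is the diagonal cell
        have := block_diag (x1 := (x1 : ℕ)) (x2 := (x2 : ℕ))
          (d1 := 4 * a + 1 - (x1 : ℕ)) (d2 := 4 * b + 1 - (x2 : ℕ))
          (by omega) (by omega) (by omega) (by omega) (by omega) (by omega)
          (by omega) (by omega) hdist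
        tauto
      · exfalso
        rw [f0_block hu.1 hu.2, f0_out hv] at hcol
        rw [not_and_or] at hv
        exact block_out_ne hu.1 hu.2 hv hdist (strip4 (by omega) (lt4b _ _) hcol)
      · exfalso
        have hdist' : (v1 : ℕ) - (u1 : ℕ) + ((u1 : ℕ) - (v1 : ℕ))
            + ((v2 : ℕ) - (u2 : ℕ) + ((u2 : ℕ) - (v2 : ℕ))) = 1 := by omega
        rw [f0_out hu, f0_block hv.1 hv.2] at hcol
        rw [not_and_or] at hu
        exact block_out_ne hv.1 hv.2 hu hdist'
          ((strip4 (lt4b _ _) (by omega) hcol).symm)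
      · exfalso
        rw [f0_out hu, f0_out hv] at hcol
        exact base_ne hdist (strip4 (lt4b _ _) (lt4b _ _) hcol)
end
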